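/- arXiv:2510.06178 — 5 statements merged into one kernel-verified Lean document; each statement's English description precedes it below -/
import Mathlib

section
/- Let P be a poset and I ⊆ P a subset that is down-closed (y ≤ x ∈ I implies y ∈ I) and directed (any two elements of I have a common upper bound in I). Then the interval module 𝔽_I : P → Vec_𝔽, which assigns 𝔽 to elements of I and 0 otherwise, with identity maps between elements of I and zero maps otherwise, is an injective object in the functor category Fun(P, Vec_𝔽). -/
/-!
Because `I` is down-closed, a natural transformation `X ⟶ 𝔽_I` is the same thing as a family of
functionals on the `X x`, `x ∈ I`, compatible with the structure maps, i.e. a linear functional on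
the direct limit of `X` over `I`; this identification is natural in `X`. Since `I` is directed,
taking this direct limit preserves injectivity, so a monomorphism `Y ⟶ X` induces an injective
linear map of direct limits, along which every functional extends because `𝔽` is a field.
-/

open CategoryTheory

attribute [local instance] Classical.propDecidable

noncomputable section

variable (𝔽 : Type*) [Field 𝔽] {P : Type*} [PartialOrder P]

/-- The carrier of the interval module: `𝔽` on `I`, `0` outside, realized as a
submodule of `𝔽`. -/
def intervalCarrier (I : Set P) (x : P) : Submodule 𝔽 𝔽 :=
  if x ∈ I then ⊤ else ⊥

/-- The structure map of the interval module: the identity if both endpoints lie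
in `I`, and zero otherwise. -/
def intervalMap (I : Set P) (x y : P) :
    intervalCarrier 𝔽 I x →ₗ[𝔽] intervalCarrier 𝔽 I y where
  toFun v := ⟨if x ∈ I ∧ y ∈ I then (v : 𝔽) else 0, by
    by_cases hy : y ∈ I
    · simp [intervalCarrier, hy]
    · have hxy : ¬(x ∈ I ∧ y ∈ I) := fun h => hy h.2
      simp only [intervalCarrier, hy, hxy, and_false, if_false, Submodule.mem_bot]⟩
  map_add' v w := Subtype.ext (by split_ifs <;> simp)
  map_smul' c v := Subtype.ext (by split_ifs <;> simp)

lemma intervalMap_id (I : Set P) (x : P) :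
    intervalMap 𝔽 I x x = LinearMap.id := by
  ext v
  show (if x ∈ I ∧ x ∈ I then (v : 𝔽) else 0) = (v : 𝔽)
  by_cases hx : x ∈ I
  · simp [hx]
  · have := v.2
    simp only [intervalCarrier, hx, if_false, Submodule.mem_bot] at this
    simp [hx, this]

lemma intervalMap_comp (I : Set P) (hdc : ∀ {x y : P}, x ≤ y → y ∈ I → x ∈ I)
    {x y z : P} (h : x ≤ y) (h' : y ≤ z) :
    (intervalMap 𝔽 I y z).comp (intervalMap 𝔽 I x y) = intervalMap 𝔽 I x z := by
  ext v
  show (if y ∈ I ∧ z ∈ I then (if x ∈ I ∧ y ∈ I then (v : 𝔽) else 0) else 0)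
      = (if x ∈ I ∧ z ∈ I then (v : 𝔽) else 0)
  by_cases hy : y ∈ I
  · by_cases hx : x ∈ I <;> by_cases hz : z ∈ I <;> simp [hx, hy, hz]
  · have h1 : ¬(x ∈ I ∧ z ∈ I) := fun hc => hy (hdc h' hc.2)
    have h2 : ¬(x ∈ I ∧ y ∈ I) := fun hc => hy hc.2
    have h3 : ¬(y ∈ I ∧ z ∈ I) := fun hc => hy hc.1
    simp [h1, h2, h3]

/-- The interval module `𝔽_I : P ⥤ Vec_𝔽` over a down-closed subset `I ⊆ P`:
it is `𝔽` on elements of `I` and `0` elsewhere, with structure maps the identity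
between elements of `I` and zero otherwise. -/
def intervalModule (I : Set P) (hdc : ∀ {x y : P}, x ≤ y → y ∈ I → x ∈ I) :
    P ⥤ ModuleCat 𝔽 where
  obj x := ModuleCat.of 𝔽 (intervalCarrier 𝔽 I x)
  map {x y} _ := ModuleCat.ofHom (intervalMap 𝔽 I x y)
  map_id x := ModuleCat.hom_ext (intervalMap_id 𝔽 I x)
  map_comp {x y z} h h' :=
    ModuleCat.hom_ext (intervalMap_comp 𝔽 I hdc (leOfHom h) (leOfHom h')).symm

namespace Module.DirectLimit

variable {R ι : Type*} [Semiring R] [Preorder ι] [DecidableEq ι] [IsDirectedOrder ι]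
  {G G' : ι → Type*} [∀ i, AddCommMonoid (G i)] [∀ i, Module R (G i)]
  [∀ i, AddCommMonoid (G' i)] [∀ i, Module R (G' i)]
  {f : ∀ i j, i ≤ j → G i →ₗ[R] G j} {f' : ∀ i j, i ≤ j → G' i →ₗ[R] G' j}
  [DirectedSystem G' (f' · · ·)]

theorem map_injective (g : ∀ i, G i →ₗ[R] G' i) (hg : ∀ i j h, g j ∘ₗ f i j h = f' i j h ∘ₗ g i)
    (hinj : ∀ i, Function.Injective (g i)) : Function.Injective (map g hg) := by
  cases isEmpty_or_nonempty ι
  · exact Function.injective_of_subsingleton _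
  intro z w hzw
  obtain ⟨i, x, y, rfl, rfl⟩ := exists_of₂ z w
  simp only [map_apply_of] at hzw
  obtain ⟨j, hij, hj⟩ := exists_eq_of_of_eq hzw
  have hfj : f i j hij x = f i j hij y := by
    apply hinj j
    simpa only [← LinearMap.comp_apply, hg] using hj
  rw [← of_f (hij := hij), hfj, of_f]

end Module.DirectLimit

namespace CategoryTheory

variable {R : Type*} [Ring R] {ι : Type*} [Preorder ι]

abbrev Functor.transition (F : ι ⥤ ModuleCat R) (i j : ι) (h : i ≤ j) : F.obj i →ₗ[R] F.obj j :=
  (F.map (homOfLE h)).hom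

instance Functor.directedSystem_transition (F : ι ⥤ ModuleCat R) :
    DirectedSystem (fun i ↦ F.obj i) (F.transition · · ·) where
  map_self i x := by
    simp only [Functor.transition, homOfLE_refl, F.map_id]
    rfl
  map_map {i j k} hij hjk x := by
    simp only [Functor.transition]
    rw [← LinearMap.comp_apply, ← ModuleCat.hom_comp, ← F.map_comp, homOfLE_comp]

abbrev Functor.directLimit [DecidableEq ι] (F : ι ⥤ ModuleCat R) : Type _ :=
  Module.DirectLimit (fun i ↦ F.obj i) F.transition

abbrev Functor.toDirectLimit [DecidableEq ι] (F : ι ⥤ ModuleCat R) (i : ι) :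
    F.obj i →ₗ[R] F.directLimit :=
  Module.DirectLimit.of R ι _ F.transition i

theorem Functor.toDirectLimit_map [DecidableEq ι] (F : ι ⥤ ModuleCat R) {i j : ι} (h : i ⟶ j)
    (v : F.obj i) : F.toDirectLimit j (F.map h v) = F.toDirectLimit i v :=
  Module.DirectLimit.of_f

def NatTrans.directLimitMap [DecidableEq ι] {F G : ι ⥤ ModuleCat R} (α : F ⟶ G) :
    F.directLimit →ₗ[R] G.directLimit :=
  Module.DirectLimit.map (fun i ↦ (α.app i).hom) fun i j h ↦ by
    rw [← ModuleCat.hom_comp, α.naturality, ModuleCat.hom_comp]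

theorem Functor.directLimit_hom_ext [DecidableEq ι] {F : ι ⥤ ModuleCat R} {M : Type*}
    [AddCommMonoid M] [Module R M] {φ ψ : F.directLimit →ₗ[R] M}
    (h : ∀ i v, φ (F.toDirectLimit i v) = ψ (F.toDirectLimit i v)) : φ = ψ :=
  Module.DirectLimit.hom_ext fun i ↦ LinearMap.ext (h i)

theorem NatTrans.directLimitMap_toDirectLimit [DecidableEq ι] {F G : ι ⥤ ModuleCat R}
    (α : F ⟶ G) (i : ι) (v : F.obj i) :
    directLimitMap α (F.toDirectLimit i v) = G.toDirectLimit i (α.app i v) :=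
  Module.DirectLimit.map_apply_of _ _ _

theorem NatTrans.directLimitMap_injective [DecidableEq ι] [IsDirectedOrder ι]
    {F G : ι ⥤ ModuleCat R} (α : F ⟶ G) (hα : ∀ i, Function.Injective (α.app i)) :
    Function.Injective (directLimitMap α) :=
  Module.DirectLimit.map_injective _ _ hα

end CategoryTheory

section HomEquivDual

variable {I : Set P} (hdc : ∀ {x y : P}, x ≤ y → y ∈ I → x ∈ I)

lemma subsingleton_intervalModule_obj {x : P} (hx : x ∉ I) :
    Subsingleton ((intervalModule 𝔽 I hdc).obj x) := by
  change Subsingleton (intervalCarrier 𝔽 I x)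
  rw [intervalCarrier, if_neg hx]
  infer_instance

variable (I) in
abbrev Set.inclusionFunctor : I ⥤ P := (Subtype.mono_coe (· ∈ I)).functor

variable {𝔽} {X : P ⥤ ModuleCat 𝔽} (φ : Module.Dual 𝔽 (I.inclusionFunctor ⋙ X).directLimit)

def intervalComponentOfDual (x : P) : X.obj x →ₗ[𝔽] intervalCarrier 𝔽 I x :=
  if hx : x ∈ I then
    -- typed over `X.obj x`, not `X.obj ⟨x, hx⟩`, so that the branch type does not depend on `hx`
    -- and `dif_pos` can rewrite it
    let toLimit : X.obj x →ₗ[𝔽] _ := (I.inclusionFunctor ⋙ X).toDirectLimit ⟨x, hx⟩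
    (φ ∘ₗ toLimit).codRestrict _ fun _ ↦ by
      rw [intervalCarrier, if_pos hx]
      trivial
  else 0

lemma coe_intervalComponentOfDual_apply {x : P} (hx : x ∈ I) (v : X.obj x) :
    (intervalComponentOfDual φ x v : 𝔽) =
      φ ((I.inclusionFunctor ⋙ X).toDirectLimit ⟨x, hx⟩ v) := by
  rw [intervalComponentOfDual, dif_pos hx]
  rfl

def intervalModuleHomOfDual : X ⟶ intervalModule 𝔽 I hdc where
  app x := ModuleCat.ofHom (intervalComponentOfDual φ x)
  naturality x y hxy := by
    by_cases hy : y ∈ I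
    · have hx : x ∈ I := hdc (leOfHom hxy) hy
      ext w
      apply Subtype.ext
      change (intervalComponentOfDual φ y (X.map hxy w) : 𝔽)
        = intervalMap 𝔽 I x y (intervalComponentOfDual φ x w)
      simp only [intervalMap, LinearMap.coe_mk, AddHom.coe_mk, if_pos (And.intro hx hy),
        coe_intervalComponentOfDual_apply φ hx, coe_intervalComponentOfDual_apply φ hy]
      exact congrArg φ <| (I.inclusionFunctor ⋙ X).toDirectLimit_map
        (homOfLE (leOfHom hxy) : (⟨x, hx⟩ : I) ⟶ ⟨y, hy⟩) w
    · have := subsingleton_intervalModule_obj 𝔽 hdc hy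
      ext
      exact Subsingleton.elim _ _

def dualOfIntervalModuleHom (g : X ⟶ intervalModule 𝔽 I hdc) :
    Module.Dual 𝔽 (I.inclusionFunctor ⋙ X).directLimit :=
  Module.DirectLimit.lift _ _ _ _ (fun i ↦ (intervalCarrier 𝔽 I i).subtype ∘ₗ (g.app i).hom)
    fun i j hij v ↦ by
      have := congrArg (fun ψ ↦ ψ.hom v) (g.naturality (homOfLE hij : (i : P) ⟶ j))
      exact (congrArg Subtype.val this).trans (if_pos ⟨i.2, j.2⟩)

lemma dualOfIntervalModuleHom_toDirectLimit (g : X ⟶ intervalModule 𝔽 I hdc) (i : I)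
    (v : X.obj i) :
    dualOfIntervalModuleHom hdc g ((I.inclusionFunctor ⋙ X).toDirectLimit i v) =
      (intervalCarrier 𝔽 I i).subtype ((g.app i).hom v) :=
  Module.DirectLimit.lift_of _ _ _

variable (X) in
def intervalModuleHomEquivDual :
    (X ⟶ intervalModule 𝔽 I hdc) ≃ Module.Dual 𝔽 (I.inclusionFunctor ⋙ X).directLimit where
  toFun := dualOfIntervalModuleHom hdc
  invFun := intervalModuleHomOfDual hdc
  left_inv g := by
    ext x v
    by_cases hx : x ∈ I
    · exact Subtype.ext <| (coe_intervalComponentOfDual_apply _ hx v).trans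
        (dualOfIntervalModuleHom_toDirectLimit hdc g ⟨x, hx⟩ v)
    · have := subsingleton_intervalModule_obj 𝔽 hdc hx
      exact Subsingleton.elim _ _
  right_inv φ := Functor.directLimit_hom_ext fun i v ↦
    (dualOfIntervalModuleHom_toDirectLimit hdc _ i v).trans
      (coe_intervalComponentOfDual_apply φ i.2 v)

lemma intervalModuleHomEquivDual_comp {Y : P ⥤ ModuleCat 𝔽} (f : Y ⟶ X)
    (g : X ⟶ intervalModule 𝔽 I hdc) :
    intervalModuleHomEquivDual hdc Y (f ≫ g) =
      intervalModuleHomEquivDual hdc X g ∘ₗ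
        NatTrans.directLimitMap (Functor.whiskerLeft I.inclusionFunctor f) :=
  Functor.directLimit_hom_ext fun i v ↦ by
    rw [LinearMap.comp_apply, NatTrans.directLimitMap_toDirectLimit]
    exact (dualOfIntervalModuleHom_toDirectLimit hdc (f ≫ g) i v).trans
      (dualOfIntervalModuleHom_toDirectLimit hdc g i _).symm

end HomEquivDual

/-- If `I ⊆ P` is down-closed and directed, then the interval module `𝔽_I` is an
injective object of the functor category `Fun(P, Vec_𝔽)`. -/
theorem intervalModule_injective (I : Set P)
    (hdc : ∀ {x y : P}, x ≤ y → y ∈ I → x ∈ I)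
    (hdir : ∀ x ∈ I, ∀ y ∈ I, ∃ u ∈ I, x ≤ u ∧ y ≤ u) :
    Injective (intervalModule 𝔽 I hdc) := by
  have : IsDirectedOrder I := DirectedOn.isDirectedOrder hdir
  refine ⟨fun {X Y} g f _ ↦ ?_⟩
  have hf : Function.Injective
      (NatTrans.directLimitMap (Functor.whiskerLeft I.inclusionFunctor f)) :=
    NatTrans.directLimitMap_injective _ fun i ↦
      (ModuleCat.mono_iff_injective (f.app i)).1 inferInstance
  obtain ⟨l, hl⟩ := LinearMap.exists_leftInverse_of_injective _ (LinearMap.ker_eq_bot.2 hf)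
  let eX := intervalModuleHomEquivDual hdc X
  let eY := intervalModuleHomEquivDual hdc Y
  refine ⟨eY.symm (eX g ∘ₗ l), eX.injective ?_⟩
  rw [intervalModuleHomEquivDual_comp, Equiv.apply_symm_apply, LinearMap.comp_assoc, hl,
    LinearMap.comp_id]

end
end

section
/- Let 𝔽 be a field and F : [0,∞]² → Vec_𝔽 a middle-exact bipersistence module. If F is monomorphic (every structure map is injective), then F is degree 1, i.e., F takes every strongly bicartesian square in the lattice [0,∞]² to a pullback square of vector spaces. -/
open CategoryTheory CategoryTheory.Limits

/-- We regard the poset `[0,∞]² = ENNReal × ENNReal` as a category via its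
product partial order. -/
noncomputable local instance (priority := 2000) : Category (ENNReal × ENNReal) :=
  Preorder.smallCategory _

/-- A commuting square `α : A ⟶ B`, `f : A ⟶ C`, `g : B ⟶ D`, `β : C ⟶ D`
(with `α ≫ g = f ≫ β`) is *middle-exact* if the associated complex
`A ⟶ B ⊞ C ⟶ D`, with maps `(α, f)` and `(g, -β)`, is exact in the middle. -/
def MiddleExact {𝒜 : Type*} [Category 𝒜] [Abelian 𝒜] {A B C D : 𝒜}
    (α : A ⟶ B) (f : A ⟶ C) (g : B ⟶ D) (β : C ⟶ D) (w : α ≫ g = f ≫ β) : Prop :=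
  (ShortComplex.mk (biprod.lift α f) (biprod.desc g (-β))
    (by simp [biprod.lift_desc, w])).Exact

/-- The square `F(x ⊓ y) → F(x) → F(x ⊔ y)`, `F(x ⊓ y) → F(y) → F(x ⊔ y)` commutes. -/
theorem squareW {P : Type*} [Lattice P] {𝒜 : Type*} [Category 𝒜] (F : P ⥤ 𝒜) (x y : P) :
    F.map (homOfLE (inf_le_left : x ⊓ y ≤ x)) ≫ F.map (homOfLE (le_sup_left : x ≤ x ⊔ y)) =
      F.map (homOfLE (inf_le_right : x ⊓ y ≤ y)) ≫
        F.map (homOfLE (le_sup_right : y ≤ x ⊔ y)) := by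
  rw [← F.map_comp, ← F.map_comp]
  exact congrArg F.map (Subsingleton.elim _ _)

/-- A functor from a lattice to an abelian category is *2-middle-exact* if each
square `F(x ⊓ y), F(x), F(y), F(x ⊔ y)` is middle-exact. -/
def TwoMiddleExact {P : Type*} [Lattice P] {𝒜 : Type*} [Category 𝒜] [Abelian 𝒜]
    (F : P ⥤ 𝒜) : Prop :=
  ∀ x y : P, MiddleExact (F.map (homOfLE (inf_le_left : x ⊓ y ≤ x)))
    (F.map (homOfLE (inf_le_right : x ⊓ y ≤ y)))
    (F.map (homOfLE (le_sup_left : x ≤ x ⊔ y)))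
    (F.map (homOfLE (le_sup_right : y ≤ x ⊔ y))) (squareW F x y)

/-- A middle-exact square whose top map is a mono is a pullback. -/
theorem middleExact_mono_isPullback {𝒜 : Type*} [Category 𝒜] [Abelian 𝒜] {A B C D : 𝒜}
    (α : A ⟶ B) (f : A ⟶ C) (g : B ⟶ D) (β : C ⟶ D) (w : α ≫ g = f ≫ β)
    (h : MiddleExact α f g β w) [Mono α] : IsPullback α f g β := by
  have sq : CommSq α f g β := ⟨w⟩
  have : Mono (biprod.lift α f) := mono_of_mono_fac (biprod.lift_fst α f)
  have hk := h.fIsKernel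
  exact IsPullback.of_isLimit (sq.isLimitEquivIsLimitKernelFork.symm
    (hk.ofIsoLimit (Fork.ext (Iso.refl _) (by simp))))

/-- A monomorphic middle-exact bipersistence module `F : [0,∞]² → Vec_𝔽` is degree 1:
it takes every strongly bicartesian square (with corners `p ⊓ q, p, q, p ⊔ q`)
to a pullback square of vector spaces. -/
theorem middleExact_monomorphic_degreeOne {𝔽 : Type*} [Field 𝔽]
    (F : ENNReal × ENNReal ⥤ ModuleCat 𝔽)
    (hme : TwoMiddleExact F)
    (hmono : ∀ {p q : ENNReal × ENNReal} (h : p ≤ q), Mono (F.map (homOfLE h))) :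
    ∀ p q : ENNReal × ENNReal, IsPullback (F.map (homOfLE (inf_le_left : p ⊓ q ≤ p)))
      (F.map (homOfLE (inf_le_right : p ⊓ q ≤ q)))
      (F.map (homOfLE (le_sup_left : p ≤ p ⊔ q)))
      (F.map (homOfLE (le_sup_right : q ≤ p ⊔ q))) := by
  intro p q
  have h := hme p q
  have hm : Mono (F.map (homOfLE (inf_le_left : p ⊓ q ≤ p))) := hmono _
  exact middleExact_mono_isPullback _ _ _ _ _ h
end

section
/- Let P be a poset with the property that every nonempty subset has a maximal element (ascending chain condition, e.g., a finite poset), let 𝒜 be an abelian category, and let F : P → 𝒜 be an injective object in the functor category Fun(P, 𝒜) ≔ functors from P (viewed as a category) to 𝒜, where P is moreover a lattice. Then F sends every morphism of P to an epimorphism. -/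
/-!
Write `L_c` for the left adjoint of evaluation at `c`, so that `L_c A` is `t ↦ ∐_{c ⟶ t} A` and
`Hom(L_c A, F) ≃ Hom(A, F c)`. Precomposition with `f : c ⟶ c'` induces `L_{c'} A ⟶ L_c A`,
which is a monomorphism when `f` is an epimorphism, since it is a coproduct inclusion
componentwise. Under the adjunction, restricting along this map is `g ↦ g ≫ F.map f`, so for
injective `F` the identity of `F c'` lifts to a section of `F.map f`. In a poset every morphism
is an epimorphism and all hom-sets are finite.
-/

open CategoryTheory Limits

namespace CategoryTheory

universe v₁ v₂ u₁ u₂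

variable {C : Type u₁} [Category.{v₁} C] {D : Type u₂} [Category.{v₂} D]

section

variable [∀ a b : C, HasCoproductsOfShape (a ⟶ b) D]

noncomputable def evaluationLeftAdjointMap {c c' : C} (f : c ⟶ c') (d : D) :
    (evaluationLeftAdjoint D c').obj d ⟶ (evaluationLeftAdjoint D c).obj d where
  app t := Limits.Sigma.desc fun g : c' ⟶ t => Limits.Sigma.ι (fun _ : c ⟶ t => d) (f ≫ g)
  naturality _ _ _ := Limits.Sigma.hom_ext _ _ fun _ => by
    erw [Limits.Sigma.ι_desc_assoc, Limits.Sigma.ι_desc_assoc, Limits.Sigma.ι_desc,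
      Limits.Sigma.ι_desc, Category.assoc]

lemma ι_evaluationLeftAdjointMap_app {c c' t : C} (f : c ⟶ c') (d : D) (g : c' ⟶ t) :
    Limits.Sigma.ι (fun _ => d) g ≫ (evaluationLeftAdjointMap f d).app t =
      Limits.Sigma.ι (fun _ => d) (f ≫ g) :=
  Limits.Sigma.ι_desc _ _

theorem evaluationAdjunctionRight_homEquiv_map_comp {c c' : C} (f : c ⟶ c') {d : D}
    {F : C ⥤ D} (φ : (evaluationLeftAdjoint D c).obj d ⟶ F) :
    (evaluationAdjunctionRight D c').homEquiv d F (evaluationLeftAdjointMap f d ≫ φ) =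
      (evaluationAdjunctionRight D c).homEquiv d F φ ≫ F.map f := by
  simp only [Adjunction.homEquiv_unit, evaluationAdjunctionRight_unit_app, evaluation_obj_map,
    NatTrans.comp_app]
  -- `((evaluationLeftAdjoint D c).obj d).obj t` is `∐ _ : c ⟶ t, d` only after unfolding
  erw [← Category.assoc, ι_evaluationLeftAdjointMap_app, Category.assoc, ← φ.naturality,
    evaluationLeftAdjoint_obj_map, Limits.Sigma.ι_desc_assoc, Category.id_comp, Category.comp_id]

end

variable [∀ a b : C, Finite (a ⟶ b)] [HasFiniteCoproducts D] [MonoCoprod D]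

instance mono_evaluationLeftAdjointMap {c c' : C} (f : c ⟶ c') [Epi f] (d : D) :
    Mono (evaluationLeftAdjointMap f d) :=
  have (t : C) : Mono ((evaluationLeftAdjointMap f d).app t) :=
    MonoCoprod.mono_of_injective' (fun _ : c ⟶ t => d) (f ≫ ·) fun _ _ => (cancel_epi f).mp
  NatTrans.mono_of_mono_app _

theorem Functor.isSplitEpi_map_of_injective (F : C ⥤ D) [Injective F] {c c' : C} (f : c ⟶ c')
    [Epi f] : IsSplitEpi (F.map f) := by
  obtain ⟨ψ, hψ⟩ := Injective.factors
    ((evaluationAdjunctionRight D c').homEquiv _ F |>.symm (𝟙 (F.obj c')))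
    (evaluationLeftAdjointMap f (F.obj c'))
  refine ⟨⟨(evaluationAdjunctionRight D c).homEquiv _ F ψ, ?_⟩⟩
  rw [← evaluationAdjunctionRight_homEquiv_map_comp, hψ, Equiv.apply_symm_apply]

end CategoryTheory

theorem injective_functor_epimorphic_general {P : Type*} [Lattice P]
    {𝒜 : Type*} [Category 𝒜] [Abelian 𝒜]
    (F : P ⥤ 𝒜) (hF : Injective F) :
    ∀ {x y : P} (h : x ≤ y), Epi (F.map (homOfLE h)) := by
  intro x y h
  have : Epi (homOfLE h) := ⟨fun _ _ _ => Subsingleton.elim _ _⟩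
  have := F.isSplitEpi_map_of_injective (homOfLE h)
  infer_instance

/-- Let `P` be a lattice in which every nonempty subset has a maximal element
(the ascending chain condition), and `𝒜` an abelian category. If `F : P ⥤ 𝒜` is an
injective object of the functor category `Fun(P, 𝒜)`, then `F` sends every
morphism of `P` to an epimorphism. -/
theorem injective_functor_epimorphic {P : Type*} [Lattice P]
    (hacc : ∀ S : Set P, S.Nonempty → ∃ m ∈ S, ∀ x ∈ S, ¬m < x)
    {𝒜 : Type*} [Category 𝒜] [Abelian 𝒜]
    (F : P ⥤ 𝒜) (hF : Injective F) :
    ∀ {x y : P} (h : x ≤ y), Epi (F.map (homOfLE h)) :=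
  injective_functor_epimorphic_general F hF
end

section
/- Let P be a finite distributive lattice, 𝔽 a field, and F : P → Vec_𝔽 a projective object in Fun(P, Vec_𝔽). Then F is monomorphic (sends every relation x ≤ y to an injective linear map) and for all x, y ∈ P the square F(x∧y), F(x), F(y), F(x∨y) is a pullback square. -/
/-!
Let `G z ⊆ ∏_p F p` consist of the tuples supported on `{p | p ≤ z}`, with inclusions as
structure maps. The structure maps of `G` are injective, and its squares are pullbacks because
`p ≤ x` and `p ≤ y` force `p ≤ x ⊓ y`. Summing the images `F(p ≤ z) v_p` is an epimorphism
`G ⟶ F`; if `F` is projective it splits, so `F` is a retract of `G`, and both properties pass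
to retracts of functors.
-/

open CategoryTheory CategoryTheory.Limits

namespace CategoryTheory.Retract

variable {C D : Type*} [Category C] [Category D] {F G : C ⥤ D}

lemma app_retract (e : Retract F G) (a : C) : e.i.app a ≫ e.r.app a = 𝟙 (F.obj a) := by
  rw [← NatTrans.comp_app, e.retract, NatTrans.id_app]

instance (e : Retract F G) (a : C) : IsSplitMono (e.i.app a) :=
  (e.map ((evaluation C D).obj a)).instIsSplitMonoI

lemma mono_functor_map (e : Retract F G) {a b : C} (f : a ⟶ b) [Mono (G.map f)] :
    Mono (F.map f) :=
  have : Mono (F.map f ≫ e.i.app b) := by rw [e.i.naturality]; infer_instance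
  mono_of_mono _ (e.i.app b)

lemma isPullback_functor_map (e : Retract F G) {a b c d : C} {f : a ⟶ b} {g : a ⟶ c}
    {h : b ⟶ d} {k : c ⟶ d} (hsq : f ≫ h = g ≫ k)
    (hG : IsPullback (G.map f) (G.map g) (G.map h) (G.map k)) :
    IsPullback (F.map f) (F.map g) (F.map h) (F.map k) := by
  refine IsPullback.mk' (by simp only [← F.map_comp, hsq]) (fun T φ φ' h₁ h₂ => ?_)
    (fun T u v huv => ⟨hG.lift (u ≫ e.i.app b) (v ≫ e.i.app c) ?_ ≫ e.r.app a, ?_, ?_⟩)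
  · rw [← cancel_mono (e.i.app a)]
    refine hG.hom_ext ?_ ?_
    · rw [Category.assoc, Category.assoc, ← e.i.naturality, reassoc_of% h₁]
    · rw [Category.assoc, Category.assoc, ← e.i.naturality, reassoc_of% h₂]
  · simp only [Category.assoc, ← e.i.naturality, reassoc_of% huv]
  · rw [Category.assoc, ← e.r.naturality, hG.lift_fst_assoc, Category.assoc, app_retract,
      Category.comp_id]
  · rw [Category.assoc, ← e.r.naturality, hG.lift_snd_assoc, Category.assoc, app_retract,
      Category.comp_id]

end CategoryTheory.Retract

namespace ModuleCat

variable {P : Type*} {R : Type*} [Ring R] {V : Type*} [AddCommGroup V] [Module R V]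

def ofSubmodules [Preorder P] (S : P →o Submodule R V) : P ⥤ ModuleCat R where
  obj z := of R (S z)
  map h := ofHom (Submodule.inclusion (S.monotone h.le))

instance mono_ofSubmodules_map [Preorder P] (S : P →o Submodule R V) {x y : P} (h : x ⟶ y) :
    Mono ((ofSubmodules S).map h) :=
  (mono_iff_injective _).2 (Submodule.inclusion_injective (S.monotone h.le))

lemma isPullback_ofSubmodules_map [Lattice P] (S : P →o Submodule R V)
    (hS : ∀ x y, S x ⊓ S y ≤ S (x ⊓ y)) (x y : P) :
    IsPullback ((ofSubmodules S).map (homOfLE (inf_le_left : x ⊓ y ≤ x)))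
      ((ofSubmodules S).map (homOfLE (inf_le_right : x ⊓ y ≤ y)))
      ((ofSubmodules S).map (homOfLE (le_sup_left : x ≤ x ⊔ y)))
      ((ofSubmodules S).map (homOfLE (le_sup_right : y ≤ x ⊔ y))) := by
  refine IsPullback.mk' rfl (fun T φ φ' h _ => (cancel_mono _).1 h) fun T a b hab => ?_
  have hval (t : T) : ((S x).subtype ∘ₗ a.hom) t = ((S y).subtype ∘ₗ b.hom) t :=
    congrArg Subtype.val (ConcreteCategory.congr_hom hab t)
  have hmem (t : T) : ((S x).subtype ∘ₗ a.hom) t ∈ S (x ⊓ y) :=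
    hS x y ⟨(a.hom t).2, hval t ▸ (b.hom t).2⟩
  exact ⟨ofHom (LinearMap.codRestrict _ ((S x).subtype ∘ₗ a.hom) hmem), rfl, by
    ext t; exact Subtype.ext (hval t)⟩

end ModuleCat

/-- Indexing `∏_p F p` by `Fin (card P)` instead of `P` keeps it in the universe of the values
of `F`. -/
noncomputable abbrev Fintype.enum (P : Type*) [Fintype P] : Fin (Fintype.card P) ≃ P :=
  (Fintype.equivFin P).symm

namespace CategoryTheory.Functor

open Fintype

noncomputable section

variable {P : Type*} [Fintype P] {R : Type*} [Ring R]

section Preorder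

variable [Preorder P] (F : P ⥤ ModuleCat R)

def supportedBelow : P →o Submodule R (Π i, F.obj (enum P i)) where
  toFun z := Submodule.pi {i | ¬ enum P i ≤ z} fun _ => ⊥
  monotone' _ _ h _ hf := Submodule.mem_pi.2 fun i hi => Submodule.mem_pi.1 hf i
    fun hiz => hi (hiz.trans h)

lemma mem_supportedBelow {z : P} {f : Π i, F.obj (enum P i)} :
    f ∈ F.supportedBelow z ↔ ∀ i, ¬ enum P i ≤ z → f i = 0 :=
  Submodule.mem_pi.trans <| by simp

abbrev freeCover : P ⥤ ModuleCat R := ModuleCat.ofSubmodules F.supportedBelow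

open scoped Classical in
def sumBelow (z : P) : (Π i, F.obj (enum P i)) →ₗ[R] F.obj z :=
  ∑ i, if h : enum P i ≤ z then (F.map (homOfLE h)).hom ∘ₗ LinearMap.proj i else 0

open scoped Classical in
lemma sumBelow_apply (z : P) (f : Π i, F.obj (enum P i)) :
    F.sumBelow z f = ∑ i, if h : enum P i ≤ z then F.map (homOfLE h) (f i) else 0 := by
  simp only [sumBelow, LinearMap.sum_apply]
  refine Finset.sum_congr rfl fun i _ => ?_
  split_ifs <;> rfl

lemma map_sumBelow {z z' : P} (h : z ≤ z') {f : Π i, F.obj (enum P i)}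
    (hf : f ∈ F.supportedBelow z) :
    F.map (homOfLE h) (F.sumBelow z f) = F.sumBelow z' f := by
  rw [sumBelow_apply, sumBelow_apply, _root_.map_sum]
  refine Finset.sum_congr rfl fun i _ => ?_
  by_cases hi : enum P i ≤ z
  · rw [dif_pos hi, dif_pos (hi.trans h), ← ConcreteCategory.comp_apply, ← F.map_comp]
    rfl
  · rw [dif_neg hi, map_zero, F.mem_supportedBelow.1 hf i hi]
    split_ifs <;> simp

lemma sumBelow_single (j : Fin (Fintype.card P)) (v : F.obj (enum P j)) :
    F.sumBelow (enum P j) (Pi.single j v) = v := by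
  rw [sumBelow_apply, Finset.sum_eq_single j (fun i _ hij => by simp [hij]) (by simp),
    dif_pos le_rfl, Pi.single_eq_same]
  exact ConcreteCategory.congr_hom (F.map_id _) v

lemma single_mem_supportedBelow (j : Fin (Fintype.card P)) (v : F.obj (enum P j)) :
    Pi.single j v ∈ F.supportedBelow (enum P j) :=
  F.mem_supportedBelow.2 fun i hi => by
    rw [Pi.single_eq_of_ne]
    rintro rfl
    exact hi le_rfl

def freeCoverπ : F.freeCover ⟶ F where
  app z := ModuleCat.ofHom (F.sumBelow z ∘ₗ (F.supportedBelow z).subtype)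
  naturality _ _ h := by
    ext f
    exact (F.map_sumBelow h.le f.2).symm

instance (z : P) : Epi (F.freeCoverπ.app z) := by
  rw [ModuleCat.epi_iff_surjective]
  obtain ⟨j, rfl⟩ := (enum P).surjective z
  exact fun v => ⟨⟨Pi.single j v, F.single_mem_supportedBelow j v⟩, F.sumBelow_single j v⟩

instance : Epi F.freeCoverπ := NatTrans.epi_of_epi_app _

def retractFreeCover [Projective F] : Retract F F.freeCover where
  i := Projective.factorThru (𝟙 F) F.freeCoverπ
  r := F.freeCoverπ
  retract := Projective.factorThru_comp _ _

end Preorder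

lemma supportedBelow_inf_le [Lattice P] (F : P ⥤ ModuleCat R) (x y : P) :
    F.supportedBelow x ⊓ F.supportedBelow y ≤ F.supportedBelow (x ⊓ y) :=
  fun _ ⟨hx, hy⟩ => F.mem_supportedBelow.2 fun i hi => by
    rw [le_inf_iff, not_and_or] at hi
    exact hi.elim (F.mem_supportedBelow.1 hx i) (F.mem_supportedBelow.1 hy i)

end

end CategoryTheory.Functor

/-- Let `P` be a finite distributive lattice, `𝔽` a field, and `F : P ⥤ Vec_𝔽` a
projective object of `Fun(P, Vec_𝔽)`. Then `F` is monomorphic (all structure maps are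
monomorphisms) and every square `F(x ⊓ y), F(x), F(y), F(x ⊔ y)` is a pullback. -/
theorem projective_functor_mono_and_pullback {P : Type*} [DistribLattice P] [Fintype P]
    {𝔽 : Type*} [Field 𝔽] (F : P ⥤ ModuleCat 𝔽) (hF : Projective F) :
    (∀ {x y : P} (h : x ≤ y), Mono (F.map (homOfLE h))) ∧
      (∀ x y : P, IsPullback (F.map (homOfLE (inf_le_left : x ⊓ y ≤ x)))
        (F.map (homOfLE (inf_le_right : x ⊓ y ≤ y)))
        (F.map (homOfLE (le_sup_left : x ≤ x ⊔ y)))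
        (F.map (homOfLE (le_sup_right : y ≤ x ⊔ y)))) := by
  let e := F.retractFreeCover
  refine ⟨fun h => e.mono_functor_map (homOfLE h), fun x y => e.isPullback_functor_map rfl ?_⟩
  exact ModuleCat.isPullback_ofSubmodules_map _ F.supportedBelow_inf_le x y
end

section
/- Let P be a down-finite distributive lattice (for every a ∈ P the set {x : x ≤ a} is finite), 𝔽 a field, and F : P → Vec_𝔽 a functor that is monomorphic and codegree 1, meaning that for all x, y ∈ P the square F(x∧y), F(x), F(y), F(x∨y) is a pushout square of vector spaces. Then F is a projective object in Fun(P, Vec_𝔽). -/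
open CategoryTheory CategoryTheory.Limits

/-!
A lift of `f : F ⟶ X` through an epimorphism `e : E ⟶ X` is built by well-founded recursion on
`P`. At `a`, the lifts already chosen below `a` give a linear map on `⊕_{x < a} F x` (a finite
sum), and it descends to the image of this sum in `F a`: as `F` is monomorphic and codegree one,
a relation `∑ F(x ≤ a) u_x = 0` forces `u_{x₀}` into the image of `F(x₀ ⊓ ⨆_{x ≠ x₀} x)`, which
is spanned by the images of the `F(x₀ ⊓ x)`; moving `u_{x₀}` along these leaves a relation with
one index fewer. The map on the image extends to `F a` and is then corrected by a section of
`e_a` so that it lifts `f_a`.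
-/

theorem wellFoundedLT_of_finite_Iic {P : Type*} [Preorder P]
    (hdf : ∀ a : P, (Set.Iic a).Finite) : WellFoundedLT P :=
  StrictMono.wellFoundedLT (f := fun a => (Set.Iic a).ncard) fun _ b h =>
    Set.ncard_lt_ncard (Set.Iic_ssubset_Iic.2 h) (hdf b)

theorem WellFoundedLT.exists_forall_of_step {α : Type*} [Preorder α] [WellFoundedLT α]
    {β : α → Sort*} [∀ a, Nonempty (β a)] (good : ∀ a, (∀ x, β x) → β a → Prop)
    (hlocal : ∀ a L L', (∀ x < a, L x = L' x) → ∀ b, good a L b → good a L' b)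
    (step : ∀ a L, (∀ x < a, good x L (L x)) → ∃ b, good a L b) :
    ∃ L : ∀ a, β a, ∀ a, good a L (L a) := by
  classical
  let extend (a : α) (rec : ∀ x, x < a → β x) (x : α) : β x :=
    if hx : x < a then rec x hx else Classical.arbitrary _
  let L := wellFounded_lt.fix fun a rec =>
    if h : ∃ b, good a (extend a rec) b then h.choose else Classical.arbitrary _
  have hL : ∀ a, ∀ x < a, extend a (fun y _ => L y) x = L x := fun a x hx => dif_pos hx
  refine ⟨L, fun a => ?_⟩
  induction a using WellFoundedLT.induction with | _ a ih =>
  have hex : ∃ b, good a (extend a fun y _ => L y) b :=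
    step a _ fun x hx => by
      rw [hL a x hx]
      exact hlocal x L _ (fun y hy => (hL a y (hy.trans hx)).symm) _ (ih x hx)
  rw [show L a = hex.choose from (wellFounded_lt.fix_eq _ a).trans (dif_pos hex)]
  exact hlocal a _ L (hL a) _ hex.choose_spec

namespace LinearMap

variable {K V V' W X : Type*} [DivisionRing K] [AddCommGroup V] [Module K V]
  [AddCommGroup V'] [Module K V'] [AddCommGroup W] [Module K W] [AddCommGroup X] [Module K X]

theorem exists_comp_eq_of_ker_le (f : V →ₗ[K] V') (g : V →ₗ[K] W) (h : ker f ≤ ker g) :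
    ∃ φ : V' →ₗ[K] W, φ ∘ₗ f = g := by
  obtain ⟨φ, hφ⟩ :=
    exists_extend ((ker f).liftQ g h ∘ₗ f.quotKerEquivRange.symm.toLinearMap)
  refine ⟨φ, ext fun v => ?_⟩
  simpa [quotKerEquivRange_symm_apply_image] using congr($hφ ⟨f v, mem_range_self f v⟩)

theorem exists_lift_of_ker_le_of_surjective (f : V →ₗ[K] V') (g : V →ₗ[K] W)
    (hfg : ker f ≤ ker g) (p : W →ₗ[K] X) (hp : Function.Surjective p) (q : V' →ₗ[K] X)
    (hq : q ∘ₗ f = p ∘ₗ g) : ∃ φ : V' →ₗ[K] W, φ ∘ₗ f = g ∧ p ∘ₗ φ = q := by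
  obtain ⟨φ₀, hφ₀⟩ := exists_comp_eq_of_ker_le f g hfg
  obtain ⟨σ, hσ⟩ := p.exists_rightInverse_of_surjective (range_eq_top.2 hp)
  refine ⟨φ₀ + σ ∘ₗ (q - p ∘ₗ φ₀), ?_, ?_⟩
  · rw [add_comp, comp_assoc, sub_comp, comp_assoc, hφ₀, hq, sub_self, comp_zero, add_zero]
  · rw [comp_add, ← comp_assoc, hσ, id_comp, add_sub_cancel]

theorem sum_comp_proj_single {R ι N : Type*} [Semiring R] [DecidableEq ι]
    {M : ι → Type*} [∀ i, AddCommMonoid (M i)] [∀ i, Module R (M i)] [AddCommMonoid N]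
    [Module R N] (c : ∀ i, M i →ₗ[R] N) {s : Finset ι} {i : ι} (hi : i ∈ s) (v : M i) :
    (∑ j ∈ s, c j ∘ₗ proj j) (Pi.single i v) = c i v := by
  rw [sum_apply, Finset.sum_eq_single_of_mem i hi
    fun j _ hji => by rw [comp_apply, proj_apply, Pi.single_eq_of_ne hji, map_zero]]
  simp

end LinearMap

namespace CategoryTheory.IsPushout

variable {R : Type*} [Ring R] {X₁ X₂ X₃ X₄ : ModuleCat R}
  {t : X₁ ⟶ X₂} {l : X₁ ⟶ X₃} {r : X₂ ⟶ X₄} {b : X₃ ⟶ X₄}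

lemma range_sup_range_eq_top (h : IsPushout t l r b) :
    LinearMap.range r.hom ⊔ LinearMap.range b.hom = ⊤ := by
  have hsurj : Function.Surjective (biprod.desc r b) :=
    (ModuleCat.epi_iff_surjective _).1 h.epi_shortComplex_g
  refine eq_top_iff.2 fun z _ => ?_
  obtain ⟨p, rfl⟩ := hsurj z
  rw [biprod.desc_eq]
  exact Submodule.add_mem_sup (LinearMap.mem_range_self r.hom _)
    (LinearMap.mem_range_self b.hom _)

lemma exists_of_apply_eq (h : IsPushout t l r b) {u : X₂} {v : X₃} (huv : r u = b v) :
    ∃ w : X₁, t w = u ∧ l w = v := by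
  have hexact : ∀ p : ↑(X₂ ⊞ X₃), biprod.desc r b p = 0 → ∃ w, biprod.lift t (-l) w = p :=
    (ShortComplex.moduleCat_exact_iff _).1 h.exact_shortComplex
  obtain ⟨w, hw⟩ := hexact ((biprod.inl : X₂ ⟶ X₂ ⊞ X₃) u - (biprod.inr : X₃ ⟶ X₂ ⊞ X₃) v)
    (by simp [← ConcreteCategory.comp_apply, huv])
  refine ⟨w, ?_, ?_⟩
  · simpa [← ConcreteCategory.comp_apply] using congr((biprod.fst : X₂ ⊞ X₃ ⟶ X₂) $hw)
  · simpa [← ConcreteCategory.comp_apply] using congr((biprod.snd : X₂ ⊞ X₃ ⟶ X₃) $hw)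

end CategoryTheory.IsPushout

namespace CategoryTheory.Functor

variable {P : Type*}

section Category

variable {C : Type*} [Category C]

def IsMonomorphic [Preorder P] (F : P ⥤ C) : Prop :=
  ∀ {x y : P} (h : x ≤ y), Mono (F.map (homOfLE h))

def IsCodegreeOne [Lattice P] (F : P ⥤ C) : Prop :=
  ∀ x y : P, IsPushout (F.map (homOfLE (inf_le_left : x ⊓ y ≤ x)))
    (F.map (homOfLE (inf_le_right : x ⊓ y ≤ y)))
    (F.map (homOfLE (le_sup_left : x ≤ x ⊔ y)))
    (F.map (homOfLE (le_sup_right : y ≤ x ⊔ y)))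

end Category

variable {R : Type*} [Ring R]

section Preorder

variable [Preorder P] (F : P ⥤ ModuleCat R)

open Classical in
/-- The structure map `F x → F a`, extended by `0` when `x ≰ a` so that it can be summed over
finite sets of indices without carrying order proofs. -/
noncomputable def leMap (x a : P) : F.obj x →ₗ[R] F.obj a :=
  if h : x ≤ a then (F.map (homOfLE h)).hom else 0

variable {F}

theorem leMap_of_le {x a : P} (h : x ≤ a) : F.leMap x a = (F.map (homOfLE h)).hom :=
  dif_pos h

@[simp]
theorem leMap_self (x : P) (u : F.obj x) : F.leMap x x u = u := by
  simp [leMap_of_le le_rfl]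

theorem leMap_leMap {x y a : P} (hxy : x ≤ y) (hya : y ≤ a) (u : F.obj x) :
    F.leMap y a (F.leMap x y u) = F.leMap x a u := by
  simp only [leMap_of_le, hxy, hya, hxy.trans hya, ← ModuleCat.comp_apply, ← F.map_comp,
    homOfLE_comp]

theorem leMap_injective (hF : F.IsMonomorphic) {x a : P} (h : x ≤ a) :
    Function.Injective (F.leMap x a) := by
  rw [leMap_of_le h]
  exact (ModuleCat.mono_iff_injective _).1 (hF h)

end Preorder

section Lattice

variable [Lattice P] {F : P ⥤ ModuleCat R}

theorem range_leMap_sup (hF : F.IsCodegreeOne) {x y a : P} (hxa : x ≤ a) (hya : y ≤ a) :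
    LinearMap.range (F.leMap (x ⊔ y) a) =
      LinearMap.range (F.leMap x a) ⊔ LinearMap.range (F.leMap y a) := by
  have hx : F.leMap x a = F.leMap (x ⊔ y) a ∘ₗ (F.map (homOfLE le_sup_left)).hom :=
    LinearMap.ext fun u => by
      rw [LinearMap.comp_apply, ← leMap_of_le, leMap_leMap le_sup_left (sup_le hxa hya)]
  have hy : F.leMap y a = F.leMap (x ⊔ y) a ∘ₗ (F.map (homOfLE le_sup_right)).hom :=
    LinearMap.ext fun u => by
      rw [LinearMap.comp_apply, ← leMap_of_le, leMap_leMap le_sup_right (sup_le hxa hya)]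
  rw [hx, hy, LinearMap.range_comp, LinearMap.range_comp, ← Submodule.map_sup,
    (hF x y).range_sup_range_eq_top, Submodule.map_top]

theorem range_leMap_finset_sup' (hF : F.IsCodegreeOne) {ι : Type*} {s : Finset ι}
    (hs : s.Nonempty) (v : ι → P) {a : P} (hv : ∀ i ∈ s, v i ≤ a) :
    LinearMap.range (F.leMap (s.sup' hs v) a) =
      ⨆ i ∈ s, LinearMap.range (F.leMap (v i) a) := by
  classical
  induction hs using Finset.Nonempty.cons_induction with
  | singleton i => rw [Finset.sup'_singleton, Finset.iSup_singleton]
  | cons i s hi hs ih =>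
    simp only [Finset.mem_cons, forall_eq_or_imp] at hv
    rw [Finset.sup'_cons hs, Finset.cons_eq_insert, Finset.iSup_insert,
      range_leMap_sup hF hv.1 (Finset.sup'_le hs v hv.2), ih hv.2]

theorem mem_range_leMap_inf (hmono : F.IsMonomorphic) (hF : F.IsCodegreeOne) {x y a : P}
    (hxa : x ≤ a) (hya : y ≤ a) {u : F.obj x}
    (hu : F.leMap x a u ∈ LinearMap.range (F.leMap y a)) :
    u ∈ LinearMap.range (F.leMap (x ⊓ y) x) := by
  obtain ⟨v, hv⟩ := hu
  have hsup : F.leMap x (x ⊔ y) u = F.leMap y (x ⊔ y) v := by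
    apply leMap_injective hmono (sup_le hxa hya)
    rw [leMap_leMap le_sup_left (sup_le hxa hya), leMap_leMap le_sup_right (sup_le hxa hya), hv]
  rw [leMap_of_le le_sup_left, leMap_of_le le_sup_right] at hsup
  obtain ⟨w, hw, -⟩ := (hF x y).exists_of_apply_eq hsup
  exact ⟨w, by rw [leMap_of_le inf_le_left, hw]⟩

end Lattice

section Cocone

variable {W : Type*} [AddCommGroup W] [Module R W]

def IsCoconeBelow [Preorder P] (F : P ⥤ ModuleCat R) (a : P) (k : ∀ x, F.obj x →ₗ[R] W) :
    Prop :=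
  ∀ ⦃x y : P⦄, x ≤ y → y < a → ∀ u, k y (F.leMap x y u) = k x u

theorem isCoconeBelow_leMap [Preorder P] (F : P ⥤ ModuleCat R) (a : P) :
    F.IsCoconeBelow a (F.leMap · a) :=
  fun _ _ hxy hya => leMap_leMap hxy hya.le

theorem IsCoconeBelow.sum_add_leMap_inf [Lattice P] {F : P ⥤ ModuleCat R} {a : P}
    {k : ∀ x, F.obj x →ₗ[R] W} (hk : F.IsCoconeBelow a k) {x : P} (hx : x < a)
    {s : Finset P} (hs : ∀ i ∈ s, i < a) (u : ∀ i, F.obj i) (w : ∀ i, F.obj (x ⊓ i)) :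
    ∑ i ∈ s, k i (u i + F.leMap (x ⊓ i) i (w i)) =
      ∑ i ∈ s, k i (u i) + k x (∑ i ∈ s, F.leMap (x ⊓ i) x (w i)) := by
  simp only [_root_.map_add, Finset.sum_add_distrib, _root_.map_sum]
  congr 1
  exact Finset.sum_congr rfl fun i hi => by rw [hk inf_le_right (hs i hi), hk inf_le_left hx]

theorem IsCoconeBelow.sum_eq_zero [DistribLattice P] {F : P ⥤ ModuleCat R}
    (hmono : F.IsMonomorphic) (hF : F.IsCodegreeOne) {a : P} {k : ∀ x, F.obj x →ₗ[R] W}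
    (hk : F.IsCoconeBelow a k) {t : Finset P} (ht : ∀ x ∈ t, x < a) (u : ∀ x, F.obj x)
    (hu : ∑ x ∈ t, F.leMap x a (u x) = 0) : ∑ x ∈ t, k x (u x) = 0 := by
  classical
  induction t using Finset.cons_induction generalizing u with
  | empty => simp
  | cons x s _ ih =>
    simp only [Finset.mem_cons, forall_eq_or_imp] at ht
    rw [Finset.sum_cons] at hu ⊢
    obtain rfl | hs := s.eq_empty_or_nonempty
    · simp only [Finset.sum_empty, add_zero] at hu ⊢
      rw [(leMap_injective hmono ht.1.le).eq_iff.1 (hu.trans (map_zero _).symm), map_zero]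
    have hsa : s.sup' hs id ≤ a := Finset.sup'_le hs id fun i hi => (ht.2 i hi).le
    have hmem : F.leMap x a (u x) ∈ LinearMap.range (F.leMap (s.sup' hs id) a) := by
      rw [eq_neg_of_add_eq_zero_left hu,
        range_leMap_finset_sup' hF hs id fun i hi => (ht.2 i hi).le]
      exact neg_mem ((Submodule.mem_iSup_finset_iff_exists_sum _ _).2
        ⟨fun i => ⟨_, LinearMap.mem_range_self _ (u i)⟩, rfl⟩)
    have hux := mem_range_leMap_inf hmono hF ht.1.le hsa hmem
    rw [Finset.sup'_inf_distrib_left, range_leMap_finset_sup' hF hs _ fun _ _ => inf_le_left,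
      Submodule.mem_iSup_finset_iff_exists_sum] at hux
    obtain ⟨μ, hμ⟩ := hux
    choose w hw using fun i => (μ i).2
    simp only [id] at hw
    have ih' := ih ht.2 (u + fun i => F.leMap (x ⊓ i) i (w i))
    simp only [Pi.add_apply] at ih'
    rw [hk.sum_add_leMap_inf ht.1 ht.2, (isCoconeBelow_leMap F a).sum_add_leMap_inf ht.1 ht.2,
      Finset.sum_congr rfl fun i _ => hw i, hμ] at ih'
    rw [add_comm] at hu ⊢
    exact ih' hu

end Cocone

end CategoryTheory.Functor

namespace CategoryTheory

theorem NatTrans.app_leMap {P R : Type*} [Preorder P] [Ring R] {F G : P ⥤ ModuleCat R}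
    (α : F ⟶ G) (x a : P) (u : F.obj x) :
    α.app a (F.leMap x a u) = G.leMap x a (α.app x u) := by
  by_cases h : x ≤ a
  · rw [Functor.leMap_of_le h, Functor.leMap_of_le h, ← ModuleCat.comp_apply, α.naturality]
    rfl
  · simp [Functor.leMap, h]

section Lift

variable {P C : Type*} [Category C]

def IsLiftAt [Preorder P] {F G H : P ⥤ C} (f : F ⟶ H) (g : G ⟶ H) (a : P)
    (L : ∀ x, F.obj x ⟶ G.obj x) (φ : F.obj a ⟶ G.obj a) : Prop :=
  φ ≫ g.app a = f.app a ∧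
    ∀ x (hx : x < a), F.map (homOfLE hx.le) ≫ φ = L x ≫ G.map (homOfLE hx.le)

theorem IsLiftAt.congr [Preorder P] {F G H : P ⥤ C} {f : F ⟶ H} {g : G ⟶ H} {a : P}
    {L L' : ∀ x, F.obj x ⟶ G.obj x} (hLL' : ∀ x < a, L x = L' x) {φ : F.obj a ⟶ G.obj a}
    (h : IsLiftAt f g a L φ) : IsLiftAt f g a L' φ :=
  ⟨h.1, fun x hx => hLL' x hx ▸ h.2 x hx⟩

theorem exists_comp_eq_of_isLiftAt [PartialOrder P] {F G H : P ⥤ C} {f : F ⟶ H} {g : G ⟶ H}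
    {L : ∀ x, F.obj x ⟶ G.obj x} (hL : ∀ a, IsLiftAt f g a L (L a)) :
    ∃ ℓ : F ⟶ G, ℓ ≫ g = f := by
  refine ⟨{ app := L, naturality := fun x y hxy => ?_ }, NatTrans.ext (funext fun a => (hL a).1)⟩
  obtain rfl | hlt := (leOfHom hxy).eq_or_lt
  · simp [Subsingleton.elim hxy (𝟙 x)]
  · exact Subsingleton.elim hxy (homOfLE hlt.le) ▸ (hL y).2 x hlt

end Lift

theorem IsLiftAt.apply_leMap {P R : Type*} [Preorder P] [Ring R] {F G H : P ⥤ ModuleCat R}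
    {f : F ⟶ H} {g : G ⟶ H} {a : P} {L : ∀ x, F.obj x ⟶ G.obj x} {φ : F.obj a ⟶ G.obj a}
    (h : IsLiftAt f g a L φ) {x : P} (hx : x < a) (u : F.obj x) :
    φ (F.leMap x a u) = G.leMap x a (L x u) := by
  rw [Functor.leMap_of_le hx.le, Functor.leMap_of_le hx.le, ← ModuleCat.comp_apply, h.2 x hx]
  rfl

theorem exists_isLiftAt {P K : Type*} [DistribLattice P] [DivisionRing K]
    {F G H : P ⥤ ModuleCat K} (hmono : F.IsMonomorphic) (hF : F.IsCodegreeOne) {a : P}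
    (ha : (Set.Iio a).Finite) (f : F ⟶ H) (g : G ⟶ H) (hg : Function.Surjective (g.app a))
    (L : ∀ x, F.obj x ⟶ G.obj x) (hL : ∀ x < a, IsLiftAt f g x L (L x)) :
    ∃ φ, IsLiftAt f g a L φ := by
  classical
  let D := ha.toFinset
  let k (x : P) : F.obj x →ₗ[K] G.obj a := G.leMap x a ∘ₗ (L x).hom
  have hk : F.IsCoconeBelow a k := by
    intro x y hxy hya u
    obtain rfl | hlt := hxy.eq_or_lt
    · simp
    · simp only [k, LinearMap.comp_apply]
      rw [(hL y hya).apply_leMap hlt u, Functor.leMap_leMap hxy hya.le]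
  let S : (∀ x, F.obj x) →ₗ[K] F.obj a := ∑ x ∈ D, F.leMap x a ∘ₗ LinearMap.proj x
  let T : (∀ x, F.obj x) →ₗ[K] G.obj a := ∑ x ∈ D, k x ∘ₗ LinearMap.proj x
  have hST : LinearMap.ker S ≤ LinearMap.ker T := fun u hu => by
    simpa [S, T] using hk.sum_eq_zero hmono hF (t := D) (by simp [D]) u (by simpa [S] using hu)
  have hfS : (f.app a).hom ∘ₗ S = (g.app a).hom ∘ₗ T := by
    ext u
    simp only [S, T, k, LinearMap.comp_apply, LinearMap.sum_apply, map_sum]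
    refine Finset.sum_congr rfl fun x hx => ?_
    rw [LinearMap.proj_apply, NatTrans.app_leMap, NatTrans.app_leMap, ← ModuleCat.comp_apply,
      (hL x (by simpa [D] using hx)).1]
  obtain ⟨φ, hφS, hgφ⟩ := LinearMap.exists_lift_of_ker_le_of_surjective S T hST _ hg _ hfS
  refine ⟨ModuleCat.ofHom φ, ModuleCat.hom_ext hgφ, fun x hx => ModuleCat.hom_ext ?_⟩
  ext u
  have hxD : x ∈ D := by simpa [D] using hx
  have hu := congr($hφS (Pi.single x u))
  rw [LinearMap.comp_apply, LinearMap.sum_comp_proj_single _ hxD,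
    LinearMap.sum_comp_proj_single _ hxD, Functor.leMap_of_le hx.le] at hu
  simpa [k, Functor.leMap_of_le hx.le] using hu

end CategoryTheory

/-- Let `P` be a down-finite distributive lattice, `𝔽` a field, and `F : P ⥤ Vec_𝔽` a
functor that is monomorphic and codegree 1 (every square `F(x ⊓ y), F(x), F(y), F(x ⊔ y)`
is a pushout). Then `F` is a projective object of `Fun(P, Vec_𝔽)`. -/
theorem monomorphic_codegreeOne_projective {P : Type*} [DistribLattice P]
    (hdf : ∀ a : P, {x : P | x ≤ a}.Finite)
    {𝔽 : Type*} [Field 𝔽] (F : P ⥤ ModuleCat 𝔽)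
    (hmono : ∀ {x y : P} (h : x ≤ y), Mono (F.map (homOfLE h)))
    (hpo : ∀ x y : P, IsPushout (F.map (homOfLE (inf_le_left : x ⊓ y ≤ x)))
      (F.map (homOfLE (inf_le_right : x ⊓ y ≤ y)))
      (F.map (homOfLE (le_sup_left : x ≤ x ⊔ y)))
      (F.map (homOfLE (le_sup_right : y ≤ x ⊔ y)))) :
    Projective F := by
  have : WellFoundedLT P := wellFoundedLT_of_finite_Iic hdf
  refine ⟨fun {E _} f e _ => ?_⟩
  have : ∀ a, Nonempty (F.obj a ⟶ E.obj a) := fun _ => ⟨0⟩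
  obtain ⟨L, hL⟩ := WellFoundedLT.exists_forall_of_step (IsLiftAt f e)
    (fun _ _ _ hLL' _ => IsLiftAt.congr hLL') fun a L hL =>
      exists_isLiftAt hmono hpo ((hdf a).subset Set.Iio_subset_Iic_self) f e
        ((ModuleCat.epi_iff_surjective _).1 inferInstance) L hL
  exact exists_comp_eq_of_isLiftAt hL
end
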